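/- arXiv:2203.13994 — 2 statements merged into one kernel-verified Lean document; each statement's English description precedes it below -/
import Mathlib

section
/- The log-likelihood L(θ) = m_S log θ - (m_S + m_T + δ) log(K̄[rθ + (1-r)] + 1), for θ > 0, attains its unique maximum at θ̂ = (K̄(1-r)+1) m_S / (K̄ r (m_T + δ)), provided m_S ≥ 1. -/
open Real

/-- The integrated log-likelihood attains its unique maximum at the MILE
`θ̂ = (K̄(1-r)+1) m_S / (K̄ r (m_T + δ))` when `m_S ≥ 1`. -/
theorem mile_unique_max (K r δ : ℝ) (hK : 0 < K) (hr0 : 0 < r) (hr1 : r < 1)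
    (hδ : 0 < δ) (mS mT : ℕ) (hmS : 1 ≤ mS)
    (L : ℝ → ℝ)
    (hL : ∀ θ, L θ = (mS : ℝ) * Real.log θ
        - ((mS : ℝ) + (mT : ℝ) + δ) * Real.log (K * (r * θ + (1 - r)) + 1))
    (θhat : ℝ)
    (hθhat : θhat = (K * (1 - r) + 1) * (mS : ℝ) / (K * r * ((mT : ℝ) + δ))) :
    ∀ θ : ℝ, 0 < θ → θ ≠ θhat → L θ < L θhat := by
  intro θ hθ hne
  have ha1 : (1 : ℝ) ≤ (mS : ℝ) := by exact_mod_cast hmS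
  have ha : (0 : ℝ) < (mS : ℝ) := by linarith
  have hc : (0 : ℝ) < (mT : ℝ) + δ := by positivity
  have hA : (0 : ℝ) < K * r := mul_pos hK hr0
  have hB : (0 : ℝ) < K * (1 - r) + 1 := by nlinarith
  have hθhat' : θhat = (mS : ℝ) * (K * (1 - r) + 1) / (((mT : ℝ) + δ) * (K * r)) := by
    rw [hθhat]; ring
  have hθhatpos : 0 < θhat := by rw [hθhat']; positivity
  have hDpos : ∀ x : ℝ, 0 < x → 0 < K * (r * x + (1 - r)) + 1 := by
    intro x hx; nlinarith
  have hLe : L = fun t : ℝ => (mS : ℝ) * Real.log t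
      - ((mS : ℝ) + ((mT : ℝ) + δ)) * Real.log (K * (r * t + (1 - r)) + 1) := by
    funext t; rw [hL t]; ring
  have hderiv : ∀ x : ℝ, 0 < x →
      HasDerivAt L
        (((mS : ℝ) * (K * (1 - r) + 1) - ((mT : ℝ) + δ) * (K * r) * x)
          / (x * (K * r * x + (K * (1 - r) + 1)))) x := by
    intro x hx
    have hDx : (0:ℝ) < K * (r * x + (1 - r)) + 1 := hDpos x hx
    have h2 : HasDerivAt (fun t : ℝ => K * (r * t + (1 - r)) + 1) (K * r) x := by
      have := (((hasDerivAt_id x).const_mul r).add_const (1 - r)).const_mul K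
      simpa using this.add_const (1 : ℝ)
    have h3 := h2.log hDx.ne'
    have h4 : HasDerivAt
        (fun t : ℝ => (mS : ℝ) * Real.log t
          - ((mS : ℝ) + ((mT : ℝ) + δ)) * Real.log (K * (r * t + (1 - r)) + 1))
        ((mS : ℝ) * x⁻¹
          - ((mS : ℝ) + ((mT : ℝ) + δ)) * (K * r / (K * (r * x + (1 - r)) + 1))) x :=
      ((Real.hasDerivAt_log hx.ne').const_mul (mS : ℝ)).sub (h3.const_mul _)
    rw [hLe]
    convert h4 using 1
    have hx0 : x ≠ 0 := hx.ne'
    have hD0 : K * (r * x + (1 - r)) + 1 ≠ 0 := hDx.ne'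
    field_simp
    ring
  have hcont : ∀ x : ℝ, 0 < x → ContinuousAt L x := fun x hx =>
    (hderiv x hx).continuousAt
  have hmono : StrictMonoOn L (Set.Ioc 0 θhat) := by
    apply strictMonoOn_of_deriv_pos (convex_Ioc 0 θhat)
    · exact fun x hx => (hcont x hx.1).continuousWithinAt
    · intro x hx
      rw [interior_Ioc] at hx
      rw [(hderiv x hx.1).deriv]
      apply div_pos
      · have hxlt : x < θhat := hx.2
        rw [hθhat'] at hxlt
        have := (lt_div_iff₀ (by positivity : (0:ℝ) < ((mT : ℝ) + δ) * (K * r))).mp hxlt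
        nlinarith
      · exact mul_pos hx.1 (by nlinarith [mul_pos hA hx.1])
  have hanti : StrictAntiOn L (Set.Ici θhat) := by
    apply strictAntiOn_of_deriv_neg (convex_Ici θhat)
    · exact fun x hx => (hcont x (lt_of_lt_of_le hθhatpos hx)).continuousWithinAt
    · intro x hx
      rw [interior_Ici] at hx
      have hx0 : 0 < x := lt_trans hθhatpos hx
      rw [(hderiv x hx0).deriv]
      apply div_neg_of_neg_of_pos
      · have hxgt : θhat < x := hx
        rw [hθhat'] at hxgt
        have := (div_lt_iff₀ (by positivity : (0:ℝ) < ((mT : ℝ) + δ) * (K * r))).mp hxgt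
        nlinarith
      · exact mul_pos hx0 (by nlinarith [mul_pos hA hx0])
  rcases lt_or_gt_of_ne hne with h | h
  · exact hmono ⟨hθ, le_of_lt h⟩ ⟨hθhatpos, le_refl _⟩ h
  · exact hanti (Set.self_mem_Ici) (le_of_lt h) h
end

section
/- Let μ, ν > 0 and π ∈ (0,1). If for all integers x ≥ 1 the conditional zero-inflated mixture pmf equals the π-mixture of zero-truncated Poisson pmfs, i.e., (π e^{-μ} μ^x/x! + (1-π) e^{-ν} ν^x/x!)/(1 - π e^{-μ} - (1-π) e^{-ν}) = π μ^x/((e^μ - 1) x!) + (1-π) ν^x/((e^ν - 1) x!) for all x ≥ 1, then μ = ν. -/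
open Real

/-!
Write `s = 1 - e^{-μ}` and `t = 1 - e^{-ν}` for the masses that the two Poisson components put
on `{1, 2, …}`. Conditioning a `π`-mixture on that set reweights its components by `s` and `t`,
so it agrees with the `π`-mixture of the conditioned components only when `s = t` or when the
two conditioned components coincide. In the first case `μ = ν` directly; in the second, the
zero-truncated Poisson pmf satisfies `g_λ(2) = (λ / 2) g_λ(1)`, so `λ` is read off `g_λ`.
-/

lemma Real.exp_sub_one_ne_zero {r : ℝ} (hr : r ≠ 0) : exp r - 1 ≠ 0 :=
  sub_ne_zero.2 fun h => hr (exp_eq_one_iff r |>.1 h)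

lemma Real.one_sub_exp_neg_pos {r : ℝ} (hr : 0 < r) : 0 < 1 - exp (-r) :=
  sub_pos.2 (exp_lt_one_iff.2 (neg_neg_of_pos hr))

noncomputable def ztpPMF (r : ℝ) (x : ℕ) : ℝ := r ^ x / ((exp r - 1) * x.factorial)

lemma ztpPMF_eq_div (r : ℝ) (hr : r ≠ 0) (x : ℕ) :
    ztpPMF r x = exp (-r) * r ^ x / x.factorial / (1 - exp (-r)) := by
  have := exp_sub_one_ne_zero hr
  rw [ztpPMF, exp_neg]
  field_simp

lemma ztpPMF_two (r : ℝ) : ztpPMF r 2 = r / 2 * ztpPMF r 1 := by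
  simp only [ztpPMF, Nat.factorial, div_eq_mul_inv, mul_inv]
  push_cast
  ring

lemma ztpPMF_one_ne_zero {r : ℝ} (hr : r ≠ 0) : ztpPMF r 1 ≠ 0 := by
  simp [ztpPMF, hr, exp_sub_one_ne_zero hr]

lemma eq_of_ztpPMF_eq {μ ν : ℝ} (hμ : μ ≠ 0) (h₁ : ztpPMF μ 1 = ztpPMF ν 1)
    (h₂ : ztpPMF μ 2 = ztpPMF ν 2) : μ = ν := by
  rw [ztpPMF_two, ztpPMF_two, ← h₁] at h₂
  have := mul_right_cancel₀ (ztpPMF_one_ne_zero hμ) h₂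
  linarith

lemma mixture_div_sub_mixture_div (w s t F G : ℝ) (hs : s ≠ 0) (ht : t ≠ 0)
    (hD : w * s + (1 - w) * t ≠ 0) :
    (w * F + (1 - w) * G) / (w * s + (1 - w) * t) - (w * (F / s) + (1 - w) * (G / t))
      = w * (1 - w) * (s - t) * (F / s - G / t) / (w * s + (1 - w) * t) := by
  field_simp
  ring

lemma mixture_div_eq_mixture_div_iff {w s t F G : ℝ} (hw₀ : w ≠ 0) (hw₁ : w ≠ 1)
    (hs : s ≠ 0) (ht : t ≠ 0) (hD : w * s + (1 - w) * t ≠ 0) :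
    (w * F + (1 - w) * G) / (w * s + (1 - w) * t) = w * (F / s) + (1 - w) * (G / t)
      ↔ s = t ∨ F / s = G / t := by
  rw [← sub_eq_zero, mixture_div_sub_mixture_div w s t F G hs ht hD]
  simp [hw₀, sub_eq_zero, hD, sub_ne_zero.2 hw₁.symm]

/-- If, for all `x ≥ 1`, the conditional zero-inflated mixture pmf equals the
`pp`-mixture of zero-truncated Poisson pmfs, then `μ = ν`. -/
theorem zipm_eq_ztp_forces_eq (μ ν pp : ℝ) (hμ : 0 < μ) (hν : 0 < ν)
    (hpp0 : 0 < pp) (hpp1 : pp < 1)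
    (h : ∀ x : ℕ, 1 ≤ x →
      (pp * Real.exp (-μ) * μ ^ x / x.factorial
          + (1 - pp) * Real.exp (-ν) * ν ^ x / x.factorial)
        / (1 - pp * Real.exp (-μ) - (1 - pp) * Real.exp (-ν))
      = pp * μ ^ x / ((Real.exp μ - 1) * x.factorial)
          + (1 - pp) * ν ^ x / ((Real.exp ν - 1) * x.factorial)) :
    μ = ν := by
  have hs := one_sub_exp_neg_pos hμ
  have ht := one_sub_exp_neg_pos hν
  have hD : 0 < pp * (1 - exp (-μ)) + (1 - pp) * (1 - exp (-ν)) := by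
    have := sub_pos.2 hpp1
    positivity
  have mass_eq_or_ztp_eq : ∀ x, 1 ≤ x → 1 - exp (-μ) = 1 - exp (-ν) ∨ ztpPMF μ x = ztpPMF ν x := by
    intro x hx
    rw [ztpPMF_eq_div μ hμ.ne', ztpPMF_eq_div ν hν.ne']
    refine (mixture_div_eq_mixture_div_iff hpp0.ne' hpp1.ne hs.ne' ht.ne' hD.ne').1 ?_
    rw [← ztpPMF_eq_div μ hμ.ne', ← ztpPMF_eq_div ν hν.ne']
    convert h x hx using 1
    · ring
    · simp only [ztpPMF]
      ring
  have of_mass_eq : 1 - exp (-μ) = 1 - exp (-ν) → μ = ν := fun hst =>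
    neg_inj.1 (exp_injective (sub_right_injective hst))
  rcases mass_eq_or_ztp_eq 1 le_rfl with hst | h₁
  · exact of_mass_eq hst
  rcases mass_eq_or_ztp_eq 2 one_le_two with hst | h₂
  · exact of_mass_eq hst
  exact eq_of_ztpPMF_eq hμ.ne' h₁ h₂
end
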